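/- arXiv:1802.04994 — 8 statements merged into one kernel-verified Lean document; each statement's English description precedes it below -/
import Mathlib

section
/- Let A be a commutative nonassociative algebra over a field K of characteristic ≠ 2, and let c_1, c_2 be distinct idempotents of A such that some third idempotent c_3 of A lies on the affine line through c_1 and c_2 (that is, c_3 = α c_1 + (1−α) c_2 with α ∈ K, α ≠ 0, α ≠ 1). Then (c_1 − c_2)² = 0 (so c_1 − c_2 is a nonzero 2-nilpotent), and for every α ∈ K the element α c_1 + (1−α) c_2 is an idempotent; in particular the whole line through c_1 and c_2 consists of idempotents. -/
/-!
For idempotents `c₁, c₂` and `p t = t • c₁ + (1 - t) • c₂`, expanding the square gives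
`(p t)² = p t - t (1 - t) • (c₁ - c₂)²`. So a single idempotent `p α` with `α ≠ 0, 1` forces
`(c₁ - c₂)² = 0`, and then every `p β` is idempotent.
-/

namespace LinearMap

variable {R M N : Type*} [CommRing R] [AddCommGroup M] [Module R M] [AddCommGroup N] [Module R N]

theorem apply_smul_add_one_sub_smul_self (B : M →ₗ[R] M →ₗ[R] N) (x y : M) (t : R) :
    B (t • x + (1 - t) • y) (t • x + (1 - t) • y)
      = t • B x x + (1 - t) • B y y - (t * (1 - t)) • B (x - y) (x - y) := by
  simp only [map_add, map_sub, map_smul, add_apply, sub_apply, smul_apply]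
  module

theorem apply_smul_add_one_sub_smul_self_of_idempotent (B : M →ₗ[R] M →ₗ[R] M) {x y : M}
    (hx : B x x = x) (hy : B y y = y) (t : R) :
    B (t • x + (1 - t) • y) (t • x + (1 - t) • y)
      = (t • x + (1 - t) • y) - (t * (1 - t)) • B (x - y) (x - y) := by
  rw [apply_smul_add_one_sub_smul_self, hx, hy]

end LinearMap

open LinearMap

theorem line_of_idempotents_general {K A : Type*} [Field K] [AddCommGroup A] [Module K A]
    (mul : A →ₗ[K] A →ₗ[K] A)
    (c₁ c₂ c₃ : A) (hne : c₁ ≠ c₂)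
    (h₁ : mul c₁ c₁ = c₁) (h₂ : mul c₂ c₂ = c₂) (h₃ : mul c₃ c₃ = c₃)
    (α : K) (hα0 : α ≠ 0) (hα1 : α ≠ 1) (hline : c₃ = α • c₁ + (1 - α) • c₂) :
    mul (c₁ - c₂) (c₁ - c₂) = 0 ∧ c₁ - c₂ ≠ 0 ∧
      ∀ β : K, mul (β • c₁ + (1 - β) • c₂) (β • c₁ + (1 - β) • c₂)
        = β • c₁ + (1 - β) • c₂ := by
  have hsq : mul (c₁ - c₂) (c₁ - c₂) = 0 := by
    have hzero : (α * (1 - α)) • mul (c₁ - c₂) (c₁ - c₂) = 0 := by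
      have hc₃ := apply_smul_add_one_sub_smul_self_of_idempotent mul h₁ h₂ α
      rw [← hline, h₃] at hc₃
      exact sub_eq_self.mp hc₃.symm
    exact (smul_eq_zero.mp hzero).resolve_left (mul_ne_zero hα0 (sub_ne_zero.mpr hα1.symm))
  refine ⟨hsq, sub_ne_zero.mpr hne, fun β => ?_⟩
  rw [apply_smul_add_one_sub_smul_self_of_idempotent mul h₁ h₂, hsq, smul_zero, sub_zero]

/-- Proposition 3.2(a). If two distinct idempotents `c₁ ≠ c₂` of a commutative
nonassociative algebra over a field of characteristic ≠ 2 are such that a third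
idempotent `c₃ = α • c₁ + (1 - α) • c₂` (with `α ≠ 0`, `α ≠ 1`) lies on the affine
line through them, then `(c₁ - c₂)² = 0` (so `c₁ - c₂` is a nonzero 2-nilpotent)
and every point of the line is an idempotent. -/
theorem line_of_idempotents {K A : Type*} [Field K] [AddCommGroup A] [Module K A]
    (h2 : (2 : K) ≠ 0)
    (mul : A →ₗ[K] A →ₗ[K] A) (hcomm : ∀ x y : A, mul x y = mul y x)
    (c₁ c₂ c₃ : A) (hne : c₁ ≠ c₂)
    (h₁ : mul c₁ c₁ = c₁) (h₂ : mul c₂ c₂ = c₂) (h₃ : mul c₃ c₃ = c₃)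
    (α : K) (hα0 : α ≠ 0) (hα1 : α ≠ 1) (hline : c₃ = α • c₁ + (1 - α) • c₂) :
    mul (c₁ - c₂) (c₁ - c₂) = 0 ∧ c₁ - c₂ ≠ 0 ∧
      ∀ β : K, mul (β • c₁ + (1 - β) • c₂) (β • c₁ + (1 - β) • c₂)
        = β • c₁ + (1 - β) • c₂ :=
  line_of_idempotents_general mul c₁ c₂ c₃ hne h₁ h₂ h₃ α hα0 hα1 hline
end

section
/- Let A be a commutative nonassociative algebra over a field K of characteristic ≠ 2, and let c_1, c_2 be distinct idempotents of A with (c_1 − c_2)² = 0. Then for every α ∈ K, the element c = α c_1 + (1−α) c_2 satisfies c (c_1 − c_2) = (1/2)(c_1 − c_2); in particular, c_1 − c_2 is an eigenvector of the multiplication operator L_c with eigenvalue 1/2 for every idempotent c on the line through c_1 and c_2. -/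
/-! Expanding `(c₁ - c₂)² = 0` with `c₁² = c₁`, `c₂² = c₂` gives `c₁ c₂ = (c₁ + c₂) / 2`.
Hence `c₁` and `c₂` both act on `c₁ - c₂` as multiplication by `1/2`, and by linearity so
does every affine combination `α c₁ + (1 - α) c₂`. -/

section CommRing

variable {R A : Type*} [CommRing R] [AddCommGroup A] [Module R A]
  (mul : A →ₗ[R] A →ₗ[R] A)

theorem mul_sub_self_of_idempotent (hcomm : ∀ x y : A, mul x y = mul y x) {a b : A}
    (ha : mul a a = a) (hb : mul b b = b) :
    mul (a - b) (a - b) = a + b - 2 • mul a b := by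
  simp only [map_sub, LinearMap.sub_apply, ha, hb, hcomm b a]
  abel

theorem mul_smul_add_smul_eq_of_eq_smul {a b v : A} {t : R}
    (ha : mul a v = t • v) (hb : mul b v = t • v) (α β : R) :
    mul (α • a + β • b) v = ((α + β) * t) • v := by
  simp only [map_add, map_smul, LinearMap.add_apply, LinearMap.smul_apply, ha, hb,
    smul_smul, add_mul, add_smul]

end CommRing

section Field

variable {K A : Type*} [Field K] [AddCommGroup A] [Module K A]
  {mul : A →ₗ[K] A →ₗ[K] A} {c₁ c₂ : A}

theorem mul_eq_half_smul_add_of_mul_sub_self_eq_zero (h2 : (2 : K) ≠ 0)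
    (hcomm : ∀ x y : A, mul x y = mul y x) (h₁ : mul c₁ c₁ = c₁) (h₂ : mul c₂ c₂ = c₂)
    (hnil : mul (c₁ - c₂) (c₁ - c₂) = 0) :
    mul c₁ c₂ = (1 / 2 : K) • (c₁ + c₂) := by
  have htwo : (2 : K) • mul c₁ c₂ = c₁ + c₂ := by
    rw [mul_sub_self_of_idempotent mul hcomm h₁ h₂, sub_eq_zero] at hnil
    rw [hnil, ofNat_smul_eq_nsmul]
  rw [← htwo, smul_smul, one_div, inv_mul_cancel₀ h2, one_smul]

theorem mul_left_sub_eq_half_smul (h2 : (2 : K) ≠ 0) (hcomm : ∀ x y : A, mul x y = mul y x)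
    (h₁ : mul c₁ c₁ = c₁) (h₂ : mul c₂ c₂ = c₂) (hnil : mul (c₁ - c₂) (c₁ - c₂) = 0) :
    mul c₁ (c₁ - c₂) = (1 / 2 : K) • (c₁ - c₂) := by
  rw [map_sub, h₁, mul_eq_half_smul_add_of_mul_sub_self_eq_zero h2 hcomm h₁ h₂ hnil]
  match_scalars <;> field_simp
  ring

theorem mul_right_sub_eq_half_smul (h2 : (2 : K) ≠ 0) (hcomm : ∀ x y : A, mul x y = mul y x)
    (h₁ : mul c₁ c₁ = c₁) (h₂ : mul c₂ c₂ = c₂) (hnil : mul (c₁ - c₂) (c₁ - c₂) = 0) :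
    mul c₂ (c₁ - c₂) = (1 / 2 : K) • (c₁ - c₂) := by
  rw [map_sub, h₂, hcomm c₂ c₁, mul_eq_half_smul_add_of_mul_sub_self_eq_zero h2 hcomm h₁ h₂ hnil]
  match_scalars <;> field_simp
  ring

end Field

theorem half_eigenvector_on_line_general {K A : Type*} [Field K] [AddCommGroup A] [Module K A]
    (h2 : (2 : K) ≠ 0)
    (mul : A →ₗ[K] A →ₗ[K] A) (hcomm : ∀ x y : A, mul x y = mul y x)
    (c₁ c₂ : A)
    (h₁ : mul c₁ c₁ = c₁) (h₂ : mul c₂ c₂ = c₂)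
    (hnil : mul (c₁ - c₂) (c₁ - c₂) = 0) :
    ∀ α : K, mul (α • c₁ + (1 - α) • c₂) (c₁ - c₂) = (1 / 2 : K) • (c₁ - c₂) := by
  intro α
  rw [mul_smul_add_smul_eq_of_eq_smul mul (mul_left_sub_eq_half_smul h2 hcomm h₁ h₂ hnil)
    (mul_right_sub_eq_half_smul h2 hcomm h₁ h₂ hnil), add_sub_cancel, one_mul]

/-- Proposition 3.2, eigenvalue part. If `c₁ ≠ c₂` are idempotents of a commutative
nonassociative algebra over a field of characteristic ≠ 2 with `(c₁ - c₂)² = 0`,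
then for every `α` the element `c = α • c₁ + (1 - α) • c₂` satisfies
`c (c₁ - c₂) = (1/2) (c₁ - c₂)`: the difference `c₁ - c₂` is an eigenvector of
`L_c` with eigenvalue `1/2` for every idempotent `c` on the line through `c₁, c₂`. -/
theorem half_eigenvector_on_line {K A : Type*} [Field K] [AddCommGroup A] [Module K A]
    (h2 : (2 : K) ≠ 0)
    (mul : A →ₗ[K] A →ₗ[K] A) (hcomm : ∀ x y : A, mul x y = mul y x)
    (c₁ c₂ : A) (hne : c₁ ≠ c₂)
    (h₁ : mul c₁ c₁ = c₁) (h₂ : mul c₂ c₂ = c₂)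
    (hnil : mul (c₁ - c₂) (c₁ - c₂) = 0) :
    ∀ α : K, mul (α • c₁ + (1 - α) • c₂) (c₁ - c₂) = (1 / 2 : K) • (c₁ - c₂) :=
  half_eigenvector_on_line_general h2 mul hcomm c₁ c₂ h₁ h₂ hnil
end

section
/- Let A be a commutative nonassociative algebra over a field K of characteristic zero such that: (i) for every nonzero idempotent c ∈ A, 1/2 is not an eigenvalue of the multiplication operator L_c; and (ii) every 2-dimensional linear subspace of A that is closed under multiplication contains at most 4 elements c with c² = c. Then every 2-dimensional affine subspace Π of A contains at most 4 elements c with c² = c, i.e. card({c ∈ Π : c² = c}) ≤ 4. -/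
/-!
Write `N_c = id - 2 L_c`; hypothesis (i) makes `N_c` injective for every idempotent `c`.
For an idempotent `c`, the point `c + x` is idempotent iff `x² = N_c x`, so if `c`, `c + z` and
`c + t z` are idempotents then `(t² - t) N_c z = 0`: a line carries at most two idempotents.
Take three idempotents `c₀`, `c₁ = c₀ + u`, `c₂ = c₀ + v` in the plane and write `N = N_{c₀}`.
Any further idempotent is `c₀ + a u + b v` with `a, b ≠ 0`, and idempotency reads
`(a² - a) N u + (b² - b) N v + 2ab uv = 0`. Dividing by `ab` and using that `N u, N v` are
independent, `(a, b)` solves a fixed linear system `a + p b = 1`, `q a + b = 1`; two distinct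
solutions force `p = q = 1`, i.e. `a + b = 1`, which puts the point on the line `c₁c₂`.
So there is at most one idempotent besides `c₀, c₁, c₂`.
-/

section

variable {K A : Type*} [Field K] [AddCommGroup A] [Module K A]

def IsIdem (mul : A →ₗ[K] A →ₗ[K] A) (c : A) : Prop := mul c c = c

def idSubTwoMul (mul : A →ₗ[K] A →ₗ[K] A) (c : A) : A →ₗ[K] A := LinearMap.id - (2 : K) • mul c

theorem ker_idSubTwoMul_eq_bot [NeZero (2 : K)] {mul : A →ₗ[K] A →ₗ[K] A} {c : A}
    (hc : c ≠ 0 → ¬ Module.End.HasEigenvalue (mul c) (1 / 2 : K)) :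
    LinearMap.ker (idSubTwoMul mul c) = ⊥ := by
  rcases eq_or_ne c 0 with rfl | hc0
  · simp [idSubTwoMul]
  refine LinearMap.ker_eq_bot'.2 fun x hx => by_contra fun hx0 => hc hc0 ?_
  have hcx : mul c x = (1 / 2 : K) • x := by
    simp only [idSubTwoMul, LinearMap.sub_apply, LinearMap.id_apply, LinearMap.smul_apply,
      sub_eq_zero] at hx
    conv_rhs => rw [hx]
    rw [smul_smul, one_div, inv_mul_cancel₀ two_ne_zero, one_smul]
  exact Module.End.hasEigenvalue_of_hasEigenvector ⟨Module.End.mem_eigenspace_iff.2 hcx, hx0⟩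

theorem isIdem_iff_of_isIdem {mul : A →ₗ[K] A →ₗ[K] A} (hcomm : ∀ x y, mul x y = mul y x)
    {c : A} (hc : IsIdem mul c) (d : A) :
    IsIdem mul d ↔ mul (d - c) (d - c) = idSubTwoMul mul c (d - c) := by
  obtain ⟨x, rfl⟩ : ∃ x, d = c + x := ⟨d - c, by abel⟩
  unfold IsIdem at hc ⊢
  simp only [add_sub_cancel_left, idSubTwoMul, map_add, LinearMap.add_apply, LinearMap.sub_apply,
    LinearMap.id_apply, LinearMap.smul_apply, hcomm x c, hc]
  constructor <;> intro h <;> linear_combination (norm := module) h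

theorem IsIdem.eq_or_eq_of_sub_eq_smul_sub {mul : A →ₗ[K] A →ₗ[K] A}
    (hcomm : ∀ x y, mul x y = mul y x) {c d e : A} {t : K}
    (hN : LinearMap.ker (idSubTwoMul mul c) = ⊥) (hc : IsIdem mul c) (hd : IsIdem mul d)
    (he : IsIdem mul e) (het : e - c = t • (d - c)) : e = c ∨ e = d := by
  rw [isIdem_iff_of_isIdem hcomm hc] at hd he
  rw [het, map_smul, map_smul, map_smul, LinearMap.smul_apply, hd] at he
  have : (t * (t - 1)) • idSubTwoMul mul c (d - c) = 0 := by
    linear_combination (norm := module) he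
  rcases smul_eq_zero.1 this with ht | hz
  · rcases mul_eq_zero.1 ht with rfl | ht
    · exact .inl (by simpa [sub_eq_zero] using het)
    · rw [sub_eq_zero.1 ht, one_smul, sub_left_inj] at het
      exact .inr het
  · rw [LinearMap.ker_eq_bot'.1 hN _ hz, smul_zero, sub_eq_zero] at het
    exact .inl het

theorem eq_and_eq_or_add_eq_one_of_mul_sub_one_eq {a b a' b' : K}
    (h₁ : b' * (a - 1) = b * (a' - 1)) (h₂ : a' * (b - 1) = a * (b' - 1)) :
    (a = a' ∧ b = b') ∨ a + b = 1 := by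
  have hsum : a + b = a' + b' := by linear_combination h₁ + h₂
  have : (b - b') * (a + b - 1) = 0 := by linear_combination (-1 : K) * h₁ + b * hsum
  rcases mul_eq_zero.1 this with hb | hab
  · have hb : b = b' := sub_eq_zero.1 hb
    exact .inl ⟨by linear_combination hsum - hb, hb⟩
  · exact .inr (sub_eq_zero.1 hab)

theorem exists_sub_eq_smul_add_smul {P : AffineSubspace K A}
    (hP : Module.finrank K P.direction = 2) {c₀ c₁ c₂ c : A}
    (h₀ : c₀ ∈ P) (h₁ : c₁ ∈ P) (h₂ : c₂ ∈ P)
    (hind : LinearIndependent K ![c₁ - c₀, c₂ - c₀]) (hc : c ∈ P) :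
    ∃ a b : K, c - c₀ = a • (c₁ - c₀) + b • (c₂ - c₀) := by
  have : FiniteDimensional K P.direction := Module.finite_of_finrank_pos (by omega)
  have hspan : Submodule.span K {c₁ - c₀, c₂ - c₀} = P.direction := by
    refine Submodule.eq_of_le_of_finrank_eq ?_ ?_
    · rw [Submodule.span_le, Set.insert_subset_iff, Set.singleton_subset_iff]
      exact ⟨P.vsub_mem_direction h₁ h₀, P.vsub_mem_direction h₂ h₀⟩
    · have h := finrank_span_eq_card hind
      rw [Matrix.range_cons_cons_empty] at h
      rw [h, hP, Fintype.card_fin]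
  obtain ⟨a, b, hab⟩ := Submodule.mem_span_pair.1 (hspan ▸ P.vsub_mem_direction hc h₀)
  exact ⟨a, b, hab.symm⟩

variable {mul : A →ₗ[K] A →ₗ[K] A} {c₀ c₁ c₂ : A}

theorem coord_equation_of_isIdem (hcomm : ∀ x y, mul x y = mul y x) (h₀ : IsIdem mul c₀)
    (h₁ : IsIdem mul c₁) (h₂ : IsIdem mul c₂) {e : A} {a b : K}
    (hab : e - c₀ = a • (c₁ - c₀) + b • (c₂ - c₀)) (he : IsIdem mul e) :
    (a * a - a) • idSubTwoMul mul c₀ (c₁ - c₀) + (b * b - b) • idSubTwoMul mul c₀ (c₂ - c₀)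
      + (2 * a * b) • mul (c₁ - c₀) (c₂ - c₀) = 0 := by
  rw [isIdem_iff_of_isIdem hcomm h₀] at h₁ h₂ he
  rw [hab] at he
  set u := c₁ - c₀
  set v := c₂ - c₀
  simp only [map_add, map_smul, LinearMap.add_apply, LinearMap.smul_apply, hcomm v u] at he
  linear_combination (norm := module) he - (a * a) • h₁ - (b * b) • h₂

theorem linearIndependent_sub_of_isIdem (hcomm : ∀ x y, mul x y = mul y x)
    (hN : LinearMap.ker (idSubTwoMul mul c₀) = ⊥) (h₀ : IsIdem mul c₀) (h₁ : IsIdem mul c₁)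
    (h₂ : IsIdem mul c₂) (h₀₁ : c₀ ≠ c₁) (h₀₂ : c₀ ≠ c₂) (h₁₂ : c₁ ≠ c₂) :
    LinearIndependent K ![c₁ - c₀, c₂ - c₀] := by
  refine (LinearIndependent.pair_iff' (sub_ne_zero.2 h₀₁.symm)).2 fun t ht => ?_
  rcases h₀.eq_or_eq_of_sub_eq_smul_sub hcomm hN h₁ h₂ ht.symm with h | h
  exacts [h₀₂ h.symm, h₁₂ h.symm]

theorem eq_and_eq_or_add_eq_one_of_isIdem (hcomm : ∀ x y, mul x y = mul y x)
    (hN : LinearMap.ker (idSubTwoMul mul c₀) = ⊥) (h₀ : IsIdem mul c₀) (h₁ : IsIdem mul c₁)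
    (h₂ : IsIdem mul c₂) (hind : LinearIndependent K ![c₁ - c₀, c₂ - c₀])
    {e e' : A} {a b a' b' : K} (ha : a ≠ 0) (hb : b ≠ 0) (ha' : a' ≠ 0) (hb' : b' ≠ 0)
    (hab : e - c₀ = a • (c₁ - c₀) + b • (c₂ - c₀))
    (hab' : e' - c₀ = a' • (c₁ - c₀) + b' • (c₂ - c₀)) (he : IsIdem mul e)
    (he' : IsIdem mul e') : (a = a' ∧ b = b') ∨ a + b = 1 := by
  have F := coord_equation_of_isIdem hcomm h₀ h₁ h₂ hab he
  have F' := coord_equation_of_isIdem hcomm h₀ h₁ h₂ hab' he'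
  obtain ⟨hu, hv⟩ := LinearIndependent.pair_iff.1 hind (a * a' * (b' * (a - 1) - b * (a' - 1)))
    (b * b' * (a' * (b - 1) - a * (b' - 1))) <| LinearMap.ker_eq_bot'.1 hN _ <| by
      rw [map_add, map_smul, map_smul]
      linear_combination (norm := module) (a' * b') • F - (a * b) • F'
  refine eq_and_eq_or_add_eq_one_of_mul_sub_one_eq ?_ ?_
  · exact sub_eq_zero.1 ((mul_eq_zero.1 hu).resolve_left (mul_ne_zero ha ha'))
  · exact sub_eq_zero.1 ((mul_eq_zero.1 hv).resolve_left (mul_ne_zero hb hb'))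

theorem coord_ne_zero_of_isIdem (hcomm : ∀ x y, mul x y = mul y x)
    (hN : LinearMap.ker (idSubTwoMul mul c₀) = ⊥) (h₀ : IsIdem mul c₀) (h₁ : IsIdem mul c₁)
    (h₂ : IsIdem mul c₂) {e : A} {a b : K} (hab : e - c₀ = a • (c₁ - c₀) + b • (c₂ - c₀))
    (he : IsIdem mul e) (hne : e ∉ ({c₀, c₁, c₂} : Set A)) : a ≠ 0 ∧ b ≠ 0 := by
  simp only [Set.mem_insert_iff, Set.mem_singleton_iff, not_or] at hne
  constructor
  · rintro rfl
    rw [zero_smul, zero_add] at hab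
    rcases h₀.eq_or_eq_of_sub_eq_smul_sub hcomm hN h₂ he hab with h | h
    exacts [hne.1 h, hne.2.2 h]
  · rintro rfl
    rw [zero_smul, add_zero] at hab
    rcases h₀.eq_or_eq_of_sub_eq_smul_sub hcomm hN h₁ he hab with h | h
    exacts [hne.1 h, hne.2.1 h]

theorem eq_of_isIdem_of_mem_of_notMem (hcomm : ∀ x y, mul x y = mul y x)
    (hN : ∀ c, IsIdem mul c → LinearMap.ker (idSubTwoMul mul c) = ⊥)
    {P : AffineSubspace K A} (hP : Module.finrank K P.direction = 2)
    (h₀ : c₀ ∈ P ∧ IsIdem mul c₀) (h₁ : c₁ ∈ P ∧ IsIdem mul c₁) (h₂ : c₂ ∈ P ∧ IsIdem mul c₂)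
    (h₀₁ : c₀ ≠ c₁) (h₀₂ : c₀ ≠ c₂) (h₁₂ : c₁ ≠ c₂) {e e' : A}
    (he : e ∈ P ∧ IsIdem mul e) (he' : e' ∈ P ∧ IsIdem mul e')
    (hne : e ∉ ({c₀, c₁, c₂} : Set A)) (hne' : e' ∉ ({c₀, c₁, c₂} : Set A)) : e = e' := by
  have hind := linearIndependent_sub_of_isIdem hcomm (hN _ h₀.2) h₀.2 h₁.2 h₂.2 h₀₁ h₀₂ h₁₂
  obtain ⟨a, b, hab⟩ := exists_sub_eq_smul_add_smul hP h₀.1 h₁.1 h₂.1 hind he.1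
  obtain ⟨a', b', hab'⟩ := exists_sub_eq_smul_add_smul hP h₀.1 h₁.1 h₂.1 hind he'.1
  obtain ⟨ha, hb⟩ := coord_ne_zero_of_isIdem hcomm (hN _ h₀.2) h₀.2 h₁.2 h₂.2 hab he.2 hne
  obtain ⟨ha', hb'⟩ := coord_ne_zero_of_isIdem hcomm (hN _ h₀.2) h₀.2 h₁.2 h₂.2 hab' he'.2 hne'
  rcases eq_and_eq_or_add_eq_one_of_isIdem hcomm (hN _ h₀.2) h₀.2 h₁.2 h₂.2 hind ha hb ha' hb'
    hab hab' he.2 he'.2 with ⟨rfl, rfl⟩ | hsum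
  · rwa [← hab', sub_left_inj] at hab
  · have hline : e - c₁ = b • (c₂ - c₁) := by
      linear_combination (norm := module) hab + hsum • (c₁ - c₀)
    simp only [Set.mem_insert_iff, Set.mem_singleton_iff, not_or] at hne
    rcases h₁.2.eq_or_eq_of_sub_eq_smul_sub hcomm (hN _ h₁.2) h₂.2 he.2 hline with h | h
    exacts [(hne.2.1 h).elim, (hne.2.2 h).elim]

end

theorem affine_plane_at_most_four_idempotents_general
    {K A : Type*} [Field K] [CharZero K] [AddCommGroup A] [Module K A]
    (mul : A →ₗ[K] A →ₗ[K] A) (hcomm : ∀ x y : A, mul x y = mul y x)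
    (hi : ∀ c : A, c ≠ 0 → mul c c = c →
      ¬ Module.End.HasEigenvalue (mul c) (1 / 2 : K)) :
    ∀ P : AffineSubspace K A, (P : Set A).Nonempty →
      Module.finrank K P.direction = 2 →
      ∀ s : Finset A, (∀ c ∈ s, c ∈ P ∧ mul c c = c) → s.card ≤ 4 := by
  classical
  intro P _ hP s hs
  have hN (c : A) (hc : IsIdem mul c) : LinearMap.ker (idSubTwoMul mul c) = ⊥ :=
    ker_idSubTwoMul_eq_bot (hi c · hc)
  rcases le_or_gt s.card 2 with hs2 | hs2
  · omega
  obtain ⟨c₀, h₀, c₁, h₁, c₂, h₂, h₀₁, h₀₂, h₁₂⟩ := Finset.two_lt_card.1 hs2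
  have hrest : (s \ {c₀, c₁, c₂}).card ≤ 1 := Finset.card_le_one.2 fun e he e' he' => by
    rw [Finset.mem_sdiff] at he he'
    exact eq_of_isIdem_of_mem_of_notMem hcomm hN hP (hs _ h₀) (hs _ h₁) (hs _ h₂) h₀₁ h₀₂ h₁₂
      (hs _ he.1) (hs _ he'.1) (by simpa using he.2) (by simpa using he'.2)
  calc s.card ≤ (s \ {c₀, c₁, c₂}).card + ({c₀, c₁, c₂} : Finset A).card :=
        Finset.card_le_card_sdiff_add_card
    _ ≤ 1 + 3 := add_le_add hrest Finset.card_le_three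

/-- Proposition 3.5. Let `A` be a commutative nonassociative algebra over a field `K`
of characteristic zero such that (i) for every nonzero idempotent `c`, `1/2` is not an
eigenvalue of `L_c`, and (ii) every 2-dimensional linear subspace of `A` closed under
multiplication contains at most 4 idempotents. Then every 2-dimensional affine
subspace of `A` contains at most 4 idempotents. -/
theorem affine_plane_at_most_four_idempotents
    {K A : Type*} [Field K] [CharZero K] [AddCommGroup A] [Module K A]
    (mul : A →ₗ[K] A →ₗ[K] A) (hcomm : ∀ x y : A, mul x y = mul y x)
    (hi : ∀ c : A, c ≠ 0 → mul c c = c →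
      ¬ Module.End.HasEigenvalue (mul c) (1 / 2 : K))
    (hii : ∀ S : Submodule K A, Module.finrank K S = 2 →
      (∀ x ∈ S, ∀ y ∈ S, mul x y ∈ S) →
      ∀ s : Finset A, (∀ c ∈ s, c ∈ S ∧ mul c c = c) → s.card ≤ 4) :
    ∀ P : AffineSubspace K A, (P : Set A).Nonempty →
      Module.finrank K P.direction = 2 →
      ∀ s : Finset A, (∀ c ∈ s, c ∈ P ∧ mul c c = c) → s.card ≤ 4 :=
  affine_plane_at_most_four_idempotents_general mul hcomm hi
end

section
/- Let A be a 2-dimensional commutative nonassociative algebra over ℂ such that A has no nonzero 2-nilpotents and the set {c ∈ A : c² = c} consists of exactly four elements 0, c_1, c_2, c_3. For i = 1, 2, 3 let λ_i ∈ ℂ be such that the characteristic polynomial of the multiplication operator L_{c_i} is (t − 1)(t − λ_i), and assume λ_i ≠ 1/2 for each i. Then 4 λ_1 λ_2 λ_3 − λ_1 − λ_2 − λ_3 + 1 = 0. -/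
/-!
Two distinct nonzero idempotents `c₁, c₂` form a basis of `A`. Writing `c₁ c₂ = p c₁ + q c₂`,
the matrices of `L_{c₁}` and `L_{c₂}` in this basis give `λ₁ = q` and `λ₂ = p`. Since
`x ↦ tr L_x` is linear, `c₃ = a c₁ + b c₂` has `1 + λ₃ = a (1 + λ₁) + b (1 + λ₂)`, while
`c₃² = c₃` together with `a, b ≠ 0` (as `c₃ ≠ 0, c₁, c₂`) gives `a + 2 b λ₂ = 1` and
`b + 2 a λ₁ = 1`. Eliminating `a` and `b` from these three linear relations leaves the syzygy.
-/

open Polynomial Module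

section

variable {K V : Type*} [Field K] [AddCommGroup V] [Module K V]

theorem LinearMap.trace_eq_add_of_charpoly_eq [FiniteDimensional K V] {f : End K V} {μ ν : K}
    (h : f.charpoly = (X - C μ) * (X - C ν)) : trace K V f = μ + ν := by
  rw [End.trace_eq_sum_roots_charpoly_of_splits (h ▸ (Splits.X_sub_C μ).mul (Splits.X_sub_C ν)),
    h, roots_mul (mul_ne_zero (X_sub_C_ne_zero μ) (X_sub_C_ne_zero ν))]
  simp

theorem LinearMap.trace_eq_add_of_apply_pair {x y : V} (hxy : LinearIndependent K ![x, y])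
    (hdim : finrank K V = 2) {f : End K V} {α β γ δ : K}
    (hx : f x = α • x + β • y) (hy : f y = γ • x + δ • y) : trace K V f = α + δ := by
  have : FiniteDimensional K V := .of_finrank_eq_succ hdim
  let B := basisOfLinearIndependentOfCardEqFinrank hxy (by simp [hdim])
  have hB₀ : B 0 = x := by simp [B]
  have hB₁ : B 1 = y := by simp [B]
  rw [← hB₀, ← hB₁] at hx hy
  rw [trace_eq_matrix_trace K B, Matrix.trace_fin_two]
  simp [toMatrix_apply, hx, hy]

theorem LinearIndependent.exists_eq_smul_add_smul {x y : V} (hxy : LinearIndependent K ![x, y])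
    (hdim : finrank K V = 2) (z : V) : ∃ a b : K, z = a • x + b • y := by
  have : FiniteDimensional K V := .of_finrank_eq_succ hdim
  have hspan := hxy.span_eq_top_of_card_eq_finrank' (by simp [hdim])
  rw [Matrix.range_cons, Matrix.range_cons, Matrix.range_empty, Set.union_empty,
    Set.singleton_union] at hspan
  obtain ⟨a, b, h⟩ := Submodule.mem_span_pair.mp (hspan ▸ Submodule.mem_top : z ∈ _)
  exact ⟨a, b, h.symm⟩

variable {mul : V →ₗ[K] V →ₗ[K] V}

theorem eq_zero_or_eq_one_of_smul_idempotent {c : V} (hc : c ≠ 0) (hcc : mul c c = c) {t : K}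
    (ht : mul (t • c) (t • c) = t • c) : t = 0 ∨ t = 1 := by
  simp only [map_smul, LinearMap.smul_apply, hcc, smul_smul] at ht
  have : (t * t - t) • c = 0 := by rw [sub_smul, ht, sub_self]
  have : t * (t - 1) = 0 := by linear_combination (smul_eq_zero.mp this).resolve_right hc
  simpa [sub_eq_zero] using this

theorem linearIndependent_pair_of_idempotent {c₁ c₂ : V} (hc₁ : c₁ ≠ 0) (hc₂ : c₂ ≠ 0)
    (h12 : c₁ ≠ c₂) (e₁ : mul c₁ c₁ = c₁) (e₂ : mul c₂ c₂ = c₂) :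
    LinearIndependent K ![c₁, c₂] := by
  rw [LinearIndependent.pair_iff' hc₁]
  rintro t rfl
  rcases eq_zero_or_eq_one_of_smul_idempotent hc₁ e₁ e₂ with rfl | rfl
  · exact hc₂ (zero_smul K c₁)
  · exact h12 (one_smul K c₁).symm

theorem mul_smul_add_smul_self (hcomm : ∀ x y, mul x y = mul y x) {c₁ c₂ : V}
    (e₁ : mul c₁ c₁ = c₁) (e₂ : mul c₂ c₂ = c₂) {p q : K} (hpq : mul c₁ c₂ = p • c₁ + q • c₂)
    (a b : K) :
    mul (a • c₁ + b • c₂) (a • c₁ + b • c₂) =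
      (a * a + 2 * a * b * p) • c₁ + (b * b + 2 * a * b * q) • c₂ := by
  simp only [map_add, map_smul, LinearMap.add_apply, LinearMap.smul_apply, e₁, e₂, hcomm c₂ c₁,
    hpq]
  module

theorem add_two_mul_eq_one_of_idempotent (hcomm : ∀ x y, mul x y = mul y x) {c₁ c₂ : V}
    (e₁ : mul c₁ c₁ = c₁) (e₂ : mul c₂ c₂ = c₂) {p q : K} (hpq : mul c₁ c₂ = p • c₁ + q • c₂)
    (hli : LinearIndependent K ![c₁, c₂]) {a b : K}
    (h0 : a • c₁ + b • c₂ ≠ 0) (h1 : a • c₁ + b • c₂ ≠ c₁) (h2 : a • c₁ + b • c₂ ≠ c₂)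
    (e : mul (a • c₁ + b • c₂) (a • c₁ + b • c₂) = a • c₁ + b • c₂) :
    a + 2 * b * p = 1 ∧ b + 2 * a * q = 1 := by
  rw [mul_smul_add_smul_self hcomm e₁ e₂ hpq, ← sub_eq_zero] at e
  obtain ⟨ha, hb⟩ := LinearIndependent.pair_iff.mp hli (a * (a + 2 * b * p - 1))
    (b * (b + 2 * a * q - 1)) (by rw [← e]; module)
  have ha0 : a ≠ 0 := by
    rintro rfl
    rcases mul_eq_zero.mp (by linear_combination hb : b * (b - 1) = 0) with rfl | hb1
    · exact h0 (by simp)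
    · exact h2 (by simp [sub_eq_zero.mp hb1])
  have hb0 : b ≠ 0 := by
    rintro rfl
    rcases mul_eq_zero.mp (by linear_combination ha : a * (a - 1) = 0) with rfl | ha1
    · exact h0 (by simp)
    · exact h1 (by simp [sub_eq_zero.mp ha1])
  exact ⟨by linear_combination (mul_eq_zero.mp ha).resolve_left ha0,
    by linear_combination (mul_eq_zero.mp hb).resolve_left hb0⟩

theorem trace_mul_smul_add_smul (hcomm : ∀ x y, mul x y = mul y x) {c₁ c₂ : V}
    (e₁ : mul c₁ c₁ = c₁) (e₂ : mul c₂ c₂ = c₂) {p q : K} (hpq : mul c₁ c₂ = p • c₁ + q • c₂)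
    (hli : LinearIndependent K ![c₁, c₂]) (hdim : finrank K V = 2) (a b : K) :
    LinearMap.trace K V (mul (a • c₁ + b • c₂)) = a * (1 + q) + b * (1 + p) := by
  rw [LinearMap.trace_eq_add_of_apply_pair hli hdim (α := a + b * p) (β := b * q) (γ := a * p)
    (δ := a * q + b)]
  · ring
  · simp only [map_add, map_smul, LinearMap.add_apply, LinearMap.smul_apply, e₁, hcomm c₂ c₁, hpq]
    module
  · simp only [map_add, map_smul, LinearMap.add_apply, LinearMap.smul_apply, e₂, hpq]
    module

end

-- `(1 - 4 l₁ l₂) a = 1 - 2 l₂` and `(1 - 4 l₁ l₂) b = 1 - 2 l₁` by Cramer's rule.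
theorem syzygy_of_linear_relations {R : Type*} [CommRing R] {a b l₁ l₂ l₃ : R}
    (h₁ : a + 2 * b * l₂ = 1) (h₂ : b + 2 * a * l₁ = 1)
    (h₃ : 1 + l₃ = a * (1 + l₁) + b * (1 + l₂)) :
    4 * l₁ * l₂ * l₃ - l₁ - l₂ - l₃ + 1 = 0 := by
  linear_combination (4 * l₁ * l₂ - 1) * h₃ - (1 + l₁) * (h₁ - 2 * l₂ * h₂) -
    (1 + l₂) * (h₂ - 2 * l₁ * h₁)

theorem spectral_syzygy_dim_two_general
    {A : Type*} [AddCommGroup A] [Module ℂ A] [FiniteDimensional ℂ A]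
    (hdim : Module.finrank ℂ A = 2)
    (mul : A →ₗ[ℂ] A →ₗ[ℂ] A) (hcomm : ∀ x y : A, mul x y = mul y x)
    (c₁ c₂ c₃ : A)
    (hc₁ : c₁ ≠ 0) (hc₂ : c₂ ≠ 0) (hc₃ : c₃ ≠ 0)
    (h12 : c₁ ≠ c₂) (h13 : c₁ ≠ c₃) (h23 : c₂ ≠ c₃)
    (hidm : {c : A | mul c c = c} = {0, c₁, c₂, c₃})
    (lam₁ lam₂ lam₃ : ℂ)
    (hχ₁ : LinearMap.charpoly (mul c₁) = (X - 1) * (X - C lam₁))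
    (hχ₂ : LinearMap.charpoly (mul c₂) = (X - 1) * (X - C lam₂))
    (hχ₃ : LinearMap.charpoly (mul c₃) = (X - 1) * (X - C lam₃)) :
    4 * lam₁ * lam₂ * lam₃ - lam₁ - lam₂ - lam₃ + 1 = 0 := by
  have idem : ∀ c ∈ ({0, c₁, c₂, c₃} : Set A), mul c c = c := fun c hc => (hidm ▸ hc :)
  have trace_eq {c : A} {l : ℂ} (hχ : (mul c).charpoly = (X - 1) * (X - C l)) :
      LinearMap.trace ℂ A (mul c) = 1 + l :=
    LinearMap.trace_eq_add_of_charpoly_eq (by rw [hχ, C_1])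
  have e₁ := idem c₁ (by simp)
  have e₂ := idem c₂ (by simp)
  have hli := linearIndependent_pair_of_idempotent hc₁ hc₂ h12 e₁ e₂
  obtain ⟨p, q, hpq⟩ := hli.exists_eq_smul_add_smul hdim (mul c₁ c₂)
  obtain ⟨a, b, rfl⟩ := hli.exists_eq_smul_add_smul hdim c₃
  obtain ⟨h₁, h₂⟩ := add_two_mul_eq_one_of_idempotent hcomm e₁ e₂ hpq hli hc₃ h13.symm h23.symm
    (idem _ (by simp))
  have htr := trace_mul_smul_add_smul hcomm e₁ e₂ hpq hli hdim
  have hq : lam₁ = q := by simpa [trace_eq hχ₁] using htr 1 0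
  have hp : lam₂ = p := by simpa [trace_eq hχ₂] using htr 0 1
  subst hp hq
  exact syzygy_of_linear_relations h₁ h₂ (trace_eq hχ₃ ▸ htr a b)

/-- Spectral syzygy for two-dimensional generic algebras. Let `A` be a 2-dimensional
commutative nonassociative algebra over `ℂ` with no nonzero 2-nilpotents whose set of
idempotents consists of exactly the four elements `0, c₁, c₂, c₃`. If the
characteristic polynomial of `L_{cᵢ}` is `(t - 1)(t - λᵢ)` with `λᵢ ≠ 1/2`, then
`4 λ₁ λ₂ λ₃ - λ₁ - λ₂ - λ₃ + 1 = 0`. -/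
theorem spectral_syzygy_dim_two
    {A : Type*} [AddCommGroup A] [Module ℂ A] [FiniteDimensional ℂ A]
    (hdim : Module.finrank ℂ A = 2)
    (mul : A →ₗ[ℂ] A →ₗ[ℂ] A) (hcomm : ∀ x y : A, mul x y = mul y x)
    (hnil : ∀ x : A, mul x x = 0 → x = 0)
    (c₁ c₂ c₃ : A)
    (hc₁ : c₁ ≠ 0) (hc₂ : c₂ ≠ 0) (hc₃ : c₃ ≠ 0)
    (h12 : c₁ ≠ c₂) (h13 : c₁ ≠ c₃) (h23 : c₂ ≠ c₃)
    (hidm : {c : A | mul c c = c} = {0, c₁, c₂, c₃})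
    (lam₁ lam₂ lam₃ : ℂ)
    (hχ₁ : LinearMap.charpoly (mul c₁) = (X - 1) * (X - C lam₁))
    (hχ₂ : LinearMap.charpoly (mul c₂) = (X - 1) * (X - C lam₂))
    (hχ₃ : LinearMap.charpoly (mul c₃) = (X - 1) * (X - C lam₃))
    (hl₁ : lam₁ ≠ 1 / 2) (hl₂ : lam₂ ≠ 1 / 2) (hl₃ : lam₃ ≠ 1 / 2) :
    4 * lam₁ * lam₂ * lam₃ - lam₁ - lam₂ - lam₃ + 1 = 0 :=
  spectral_syzygy_dim_two_general hdim mul hcomm c₁ c₂ c₃ hc₁ hc₂ hc₃ h12 h13 h23 hidm lam₁ lam₂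
    lam₃ hχ₁ hχ₂ hχ₃
end

section
/- Let K be a field of characteristic zero and let λ_1, λ_2, λ_3 ∈ K satisfy 4 λ_1 λ_2 λ_3 − λ_1 − λ_2 − λ_3 + 1 = 0 and λ_i ≠ 1/2 for i = 1, 2, 3. Then there exists a commutative bilinear multiplication on the vector space K² and three pairwise distinct nonzero idempotents c_1, c_2, c_3 of the resulting algebra such that for each i the characteristic polynomial of the multiplication operator L_{c_i} is (t − 1)(t − λ_i) (i.e. the Peirce spectrum of c_i is {1, λ_i}). -/
/-!
Take `K²` with basis `e₀, e₁` of idempotents and `e₀e₁ = λ₂ e₀ + λ₁ e₁`; then `L_{e₀}` and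
`L_{e₁}` are triangular with spectra `{1, λ₁}` and `{1, λ₂}`. A third idempotent `x e₀ + y e₁`
with `x, y ≠ 0` exists when `1 - 4 λ₁ λ₂ ≠ 0`, which `λ₁ ≠ 1/2` and the syzygy guarantee. In
dimension two an idempotent `c` is a `1`-eigenvector of `L_c`, so its other eigenvalue is
`tr L_c - 1`, and the syzygy is exactly the condition that this equals `λ₃`.
-/

open Polynomial

theorem LinearMap.charpoly_eq_of_apply_eq_self {K V : Type*} [Field K] [AddCommGroup V]
    [Module K V] [FiniteDimensional K V] (hV : Module.finrank K V = 2) {f : V →ₗ[K] V} {v : V}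
    (hv : v ≠ 0) (hfv : f v = v) {μ : K} (htr : LinearMap.trace K V f = 1 + μ) :
    f.charpoly = (X - 1) * (X - C μ) := by
  let b := Module.finBasisOfFinrankEq K V hV
  have hroot : f.charpoly.IsRoot 1 :=
    (Module.End.hasEigenvalue_iff_isRoot_charpoly f 1).1
      (Module.End.hasEigenvalue_of_hasEigenvector ⟨by simpa using hfv, hv⟩)
  rw [LinearMap.trace_eq_matrix_trace K b] at htr
  rw [← LinearMap.charpoly_toMatrix f b, Matrix.charpoly_fin_two] at hroot ⊢
  simp only [IsRoot, eval_add, eval_sub, eval_pow, eval_X, eval_mul, eval_C, htr] at hroot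
  rw [htr, show (LinearMap.toMatrix b b f).det = μ by linear_combination hroot]
  simp only [C_add, C_1]
  ring

lemma one_sub_two_mul_ne_zero {K : Type*} [Field K] {a : K} (ha : a ≠ 1 / 2) :
    1 - 2 * a ≠ 0 := by
  intro h
  have h2 : (2 : K) ≠ 0 := by rintro h2; simp [h2] at h
  exact ha (by field_simp; linear_combination -h)

lemma one_sub_four_mul_mul_ne_zero {K : Type*} [Field K] {a b c : K}
    (hsyz : 4 * a * b * c - a - b - c + 1 = 0) (ha : a ≠ 1 / 2) : 1 - 4 * a * b ≠ 0 := by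
  intro h
  have hsq : (1 - 2 * a) ^ 2 = 0 := by
    linear_combination (-4 * a) * hsyz + (1 - 4 * a * c) * h
  exact one_sub_two_mul_ne_zero ha (pow_eq_zero_iff two_ne_zero |>.mp hsq)

section IdempotentPair

variable {K : Type*} [Field K] (a b : K)

/-- The multiplication on `K²` with `e₀² = e₀`, `e₁² = e₁` and `e₀e₁ = e₁e₀ = b e₀ + a e₁`. -/
def idempotentPairMul : (Fin 2 → K) →ₗ[K] (Fin 2 → K) →ₗ[K] (Fin 2 → K) :=
  LinearMap.mk₂ K
    (fun u v => ![u 0 * v 0 + b * (u 0 * v 1 + u 1 * v 0),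
                  u 1 * v 1 + a * (u 0 * v 1 + u 1 * v 0)])
    (by intro u₁ u₂ v; ext i; fin_cases i <;> simp <;> ring)
    (by intro r u v; ext i; fin_cases i <;> simp <;> ring)
    (by intro u v₁ v₂; ext i; fin_cases i <;> simp <;> ring)
    (by intro r u v; ext i; fin_cases i <;> simp <;> ring)

@[simp] lemma idempotentPairMul_apply (u v : Fin 2 → K) :
    idempotentPairMul a b u v = ![u 0 * v 0 + b * (u 0 * v 1 + u 1 * v 0),
                                  u 1 * v 1 + a * (u 0 * v 1 + u 1 * v 0)] := rfl

lemma idempotentPairMul_comm (u v : Fin 2 → K) :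
    idempotentPairMul a b u v = idempotentPairMul a b v u := by
  ext i; fin_cases i <;> simp <;> ring

lemma trace_idempotentPairMul (u : Fin 2 → K) :
    LinearMap.trace K _ (idempotentPairMul a b u) = (1 + a) * u 0 + (1 + b) * u 1 := by
  rw [LinearMap.trace_eq_matrix_trace K (Pi.basisFun K (Fin 2)), Matrix.trace_fin_two,
    LinearMap.toMatrix_eq_toMatrix']
  simp [LinearMap.toMatrix'_apply]
  ring

variable {a b}

lemma idempotentPairMul_self_of_linear {x y : K} (hx : x + 2 * b * y = 1) (hy : 2 * a * x + y = 1) :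
    idempotentPairMul a b ![x, y] ![x, y] = ![x, y] := by
  ext i; fin_cases i
  · simp only [idempotentPairMul_apply, Fin.zero_eta, Matrix.cons_val_zero, Matrix.cons_val_one]
    linear_combination x * hx
  · simp only [idempotentPairMul_apply, Fin.mk_one, Matrix.cons_val_zero, Matrix.cons_val_one]
    linear_combination y * hy

/-- The idempotent `x e₀ + y e₁` solves `x + 2 b y = 1`, `2 a x + y = 1`, a system of
determinant `1 - 4 a b`. -/
lemma exists_idempotentPairMul_idempotent {c : K} (hsyz : 4 * a * b * c - a - b - c + 1 = 0)
    (ha : a ≠ 1 / 2) (hb : b ≠ 1 / 2) :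
    ∃ x y : K, x ≠ 0 ∧ y ≠ 0 ∧ idempotentPairMul a b ![x, y] ![x, y] = ![x, y] ∧
      LinearMap.trace K _ (idempotentPairMul a b ![x, y]) = 1 + c := by
  have hD := one_sub_four_mul_mul_ne_zero hsyz ha
  obtain ⟨x, hx⟩ : ∃ x, x * (1 - 4 * a * b) = 1 - 2 * b := ⟨_, div_mul_cancel₀ _ hD⟩
  obtain ⟨y, hy⟩ : ∃ y, y * (1 - 4 * a * b) = 1 - 2 * a := ⟨_, div_mul_cancel₀ _ hD⟩
  refine ⟨x, y, ?_, ?_, idempotentPairMul_self_of_linear ?_ ?_, ?_⟩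
  · rintro rfl; exact one_sub_two_mul_ne_zero hb (by simpa using hx.symm)
  · rintro rfl; exact one_sub_two_mul_ne_zero ha (by simpa using hy.symm)
  · exact mul_right_cancel₀ hD (by linear_combination hx + 2 * b * hy)
  · exact mul_right_cancel₀ hD (by linear_combination 2 * a * hx + hy)
  · rw [trace_idempotentPairMul]
    simp only [Matrix.cons_val_zero, Matrix.cons_val_one]
    exact mul_right_cancel₀ hD (by linear_combination (1 + a) * hx + (1 + b) * hy + hsyz)

end IdempotentPair

theorem exists_algebra_with_prescribed_spectrum_general
    {K : Type*} [Field K]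
    (lam₁ lam₂ lam₃ : K)
    (hsyz : 4 * lam₁ * lam₂ * lam₃ - lam₁ - lam₂ - lam₃ + 1 = 0)
    (hl₁ : lam₁ ≠ 1 / 2) (hl₂ : lam₂ ≠ 1 / 2) :
    ∃ mul : (Fin 2 → K) →ₗ[K] (Fin 2 → K) →ₗ[K] (Fin 2 → K),
      (∀ x y, mul x y = mul y x) ∧
      ∃ c₁ c₂ c₃ : Fin 2 → K,
        c₁ ≠ 0 ∧ c₂ ≠ 0 ∧ c₃ ≠ 0 ∧ c₁ ≠ c₂ ∧ c₁ ≠ c₃ ∧ c₂ ≠ c₃ ∧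
        mul c₁ c₁ = c₁ ∧ mul c₂ c₂ = c₂ ∧ mul c₃ c₃ = c₃ ∧
        LinearMap.charpoly (mul c₁) = (X - 1) * (X - C lam₁) ∧
        LinearMap.charpoly (mul c₂) = (X - 1) * (X - C lam₂) ∧
        LinearMap.charpoly (mul c₃) = (X - 1) * (X - C lam₃) := by
  obtain ⟨x, y, hx, hy, hidem, htr⟩ := exists_idempotentPairMul_idempotent hsyz hl₁ hl₂
  have hV : Module.finrank K (Fin 2 → K) = 2 := Module.finrank_fin_fun K
  have he₀ : idempotentPairMul lam₁ lam₂ ![1, 0] ![1, 0] = ![1, 0] := by simp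
  have he₁ : idempotentPairMul lam₁ lam₂ ![0, 1] ![0, 1] = ![0, 1] := by simp
  have hne : ![(1 : K), 0] ≠ 0 ∧ ![(0 : K), 1] ≠ 0 ∧ ![x, y] ≠ 0 ∧
      ![(1 : K), 0] ≠ ![0, 1] ∧ ![1, 0] ≠ ![x, y] ∧ ![0, 1] ≠ ![x, y] := by
    simp [funext_iff, Fin.forall_fin_two, hx, hy, eq_comm]
  obtain ⟨h₁, h₂, h₃, h₁₂, h₁₃, h₂₃⟩ := hne
  refine ⟨idempotentPairMul lam₁ lam₂, idempotentPairMul_comm _ _, ![1, 0], ![0, 1], ![x, y],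
    h₁, h₂, h₃, h₁₂, h₁₃, h₂₃, he₀, he₁, hidem,
    LinearMap.charpoly_eq_of_apply_eq_self hV h₁ he₀ ?_,
    LinearMap.charpoly_eq_of_apply_eq_self hV h₂ he₁ ?_,
    LinearMap.charpoly_eq_of_apply_eq_self hV h₃ hidem htr⟩ <;>
    simp [trace_idempotentPairMul]

/-- Theorem 4.1 (converse direction). Given `λ₁, λ₂, λ₃` in a field `K` of
characteristic zero satisfying the syzygy `4 λ₁ λ₂ λ₃ - λ₁ - λ₂ - λ₃ + 1 = 0` and
`λᵢ ≠ 1/2`, there is a commutative bilinear multiplication on `K²` together with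
three pairwise distinct nonzero idempotents `c₁, c₂, c₃` such that the characteristic
polynomial of `L_{cᵢ}` is `(t - 1)(t - λᵢ)` for each `i`. -/
theorem exists_algebra_with_prescribed_spectrum
    {K : Type*} [Field K] [CharZero K]
    (lam₁ lam₂ lam₃ : K)
    (hsyz : 4 * lam₁ * lam₂ * lam₃ - lam₁ - lam₂ - lam₃ + 1 = 0)
    (hl₁ : lam₁ ≠ 1 / 2) (hl₂ : lam₂ ≠ 1 / 2) (hl₃ : lam₃ ≠ 1 / 2) :
    ∃ mul : (Fin 2 → K) →ₗ[K] (Fin 2 → K) →ₗ[K] (Fin 2 → K),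
      (∀ x y, mul x y = mul y x) ∧
      ∃ c₁ c₂ c₃ : Fin 2 → K,
        c₁ ≠ 0 ∧ c₂ ≠ 0 ∧ c₃ ≠ 0 ∧ c₁ ≠ c₂ ∧ c₁ ≠ c₃ ∧ c₂ ≠ c₃ ∧
        mul c₁ c₁ = c₁ ∧ mul c₂ c₂ = c₂ ∧ mul c₃ c₃ = c₃ ∧
        LinearMap.charpoly (mul c₁) = (X - 1) * (X - C lam₁) ∧
        LinearMap.charpoly (mul c₂) = (X - 1) * (X - C lam₂) ∧
        LinearMap.charpoly (mul c₃) = (X - 1) * (X - C lam₃) :=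
  exists_algebra_with_prescribed_spectrum_general lam₁ lam₂ lam₃ hsyz hl₁ hl₂
end

section
/- Let A be the commutative algebra on ℝ³ whose squaring map is x² = (x_1² − x_2 x_3, x_2² − x_1 x_3, x_3² − x_1 x_2), i.e. with multiplication x∘y = (x_1y_1 − (x_2y_3 + x_3y_2)/2, x_2y_2 − (x_1y_3 + x_3y_1)/2, x_3y_3 − (x_1y_2 + x_2y_1)/2). Then a nonzero element x ∈ ℝ³ satisfies x∘x = x if and only if x_1 + x_2 + x_3 = 1 and (x_1 − 1/3)² + (x_2 − 1/3)² + (x_3 − 1/3)² = 2/3; that is, the set of nonzero idempotents of A is a circle. -/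
/-!
Subtracting two coordinates of `x² = x` gives `(xᵢ - xⱼ)(x₁ + x₂ + x₃ - 1) = 0`, so a nonzero
idempotent lies on the plane `x₁ + x₂ + x₃ = 1` (otherwise all coordinates agree and `x² = x`
forces them to vanish). On that plane, `xᵢ² - xⱼxₖ - xᵢ = -(x₁x₂ + x₂x₃ + x₃x₁)` for each `i`,
and `∑ (xᵢ - 1/3)² = 2/3 - 2(x₁x₂ + x₂x₃ + x₃x₁)`, so both conditions say that this second
elementary symmetric function vanishes.
-/

lemma funext_fin_three_iff {α : Type*} {u v : Fin 3 → α} :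
    u = v ↔ u 0 = v 0 ∧ u 1 = v 1 ∧ u 2 = v 2 := by
  simp only [funext_iff, Fin.forall_fin_succ]
  simp

section CircleAlgebra

variable {a b c : ℝ}

lemma add_add_eq_one_of_idempotent (ha : a ^ 2 - b * c = a) (hb : b ^ 2 - a * c = b)
    (hc : c ^ 2 - a * b = c) (hne : ¬(a = 0 ∧ b = 0 ∧ c = 0)) : a + b + c = 1 := by
  by_contra hs
  have hs' : a + b + c - 1 ≠ 0 := sub_ne_zero.mpr hs
  have hab : a = b := by
    have : (a - b) * (a + b + c - 1) = 0 := by linear_combination ha - hb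
    simpa [hs', sub_eq_zero] using this
  have hbc : b = c := by
    have : (b - c) * (a + b + c - 1) = 0 := by linear_combination hb - hc
    simpa [hs', sub_eq_zero] using this
  subst hab hbc
  exact hne ⟨by linear_combination -ha, by linear_combination -ha, by linear_combination -ha⟩

lemma idempotent_iff_of_add_add_eq_one (hs : a + b + c = 1) :
    (a ^ 2 - b * c = a ∧ b ^ 2 - a * c = b ∧ c ^ 2 - a * b = c) ↔ a * b + b * c + c * a = 0 := by
  constructor
  · rintro ⟨ha, -, -⟩
    linear_combination a * hs - ha
  · intro hσ
    exact ⟨by linear_combination a * hs - hσ, by linear_combination b * hs - hσ,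
      by linear_combination c * hs - hσ⟩

lemma circle_iff_of_add_add_eq_one (hs : a + b + c = 1) :
    (a - 1 / 3) ^ 2 + (b - 1 / 3) ^ 2 + (c - 1 / 3) ^ 2 = 2 / 3 ↔ a * b + b * c + c * a = 0 := by
  constructor
  · intro h
    linear_combination (a + b + c + 1 / 3) * hs / 2 - h / 2
  · intro hσ
    linear_combination (a + b + c + 1 / 3) * hs - 2 * hσ

theorem idempotent_iff_circle (hne : ¬(a = 0 ∧ b = 0 ∧ c = 0)) :
    (a ^ 2 - b * c = a ∧ b ^ 2 - a * c = b ∧ c ^ 2 - a * b = c) ↔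
      a + b + c = 1 ∧ (a - 1 / 3) ^ 2 + (b - 1 / 3) ^ 2 + (c - 1 / 3) ^ 2 = 2 / 3 := by
  constructor
  · rintro ⟨ha, hb, hc⟩
    have hs := add_add_eq_one_of_idempotent ha hb hc hne
    exact ⟨hs, (circle_iff_of_add_add_eq_one hs).mpr
      ((idempotent_iff_of_add_add_eq_one hs).mp ⟨ha, hb, hc⟩)⟩
  · rintro ⟨hs, hcirc⟩
    exact (idempotent_iff_of_add_add_eq_one hs).mpr ((circle_iff_of_add_add_eq_one hs).mp hcirc)

end CircleAlgebra

/-- Example 3.6: idempotents. For the commutative algebra on `ℝ³` with squaring map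
`x² = (x₁² - x₂x₃, x₂² - x₁x₃, x₃² - x₁x₂)` (multiplication obtained by
polarization), a nonzero `x` is an idempotent iff `x₁ + x₂ + x₃ = 1` and
`(x₁ - 1/3)² + (x₂ - 1/3)² + (x₃ - 1/3)² = 2/3`: the nonzero idempotents form a
circle. -/
theorem idempotents_of_circle_algebra
    (mul : (Fin 3 → ℝ) → (Fin 3 → ℝ) → (Fin 3 → ℝ))
    (hmul : ∀ x y, mul x y =
      ![x 0 * y 0 - (x 1 * y 2 + x 2 * y 1) / 2,
        x 1 * y 1 - (x 0 * y 2 + x 2 * y 0) / 2,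
        x 2 * y 2 - (x 0 * y 1 + x 1 * y 0) / 2]) :
    ∀ x : Fin 3 → ℝ, x ≠ 0 →
      (mul x x = x ↔
        x 0 + x 1 + x 2 = 1 ∧
        (x 0 - 1 / 3) ^ 2 + (x 1 - 1 / 3) ^ 2 + (x 2 - 1 / 3) ^ 2 = 2 / 3) := by
  intro x hx
  have hsq : mul x x = ![x 0 ^ 2 - x 1 * x 2, x 1 ^ 2 - x 0 * x 2, x 2 ^ 2 - x 0 * x 1] := by
    rw [hmul, funext_fin_three_iff]
    simp only [Matrix.cons_val]
    refine ⟨?_, ?_, ?_⟩ <;> ring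
  rw [hsq, funext_fin_three_iff]
  exact idempotent_iff_circle (by simpa [funext_fin_three_iff] using hx)
end

section
/- Let A be the commutative algebra on ℝ³ with multiplication x∘y = (x_1y_1 − (x_2y_3 + x_3y_2)/2, x_2y_2 − (x_1y_3 + x_3y_1)/2, x_3y_3 − (x_1y_2 + x_2y_1)/2). Then for every nonzero idempotent c of A, the characteristic polynomial of the multiplication operator L_c is (t − 1)(t − 1/2)(t + 1/2); in particular, the Peirce spectrum of every nonzero idempotent is {1, 1/2, −1/2}. -/
/-!
The matrix of `L_c` in the standard basis is symmetric with diagonal `c` and off-diagonal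
entries `-cₖ/2`, so its characteristic polynomial depends only on `s = c₀ + c₁ + c₂` and
`q = c₀c₁ + c₁c₂ + c₀c₂`. The three coordinates of `c ∘ c = c` sum to `s² - 3q = s`, and a
weighted combination of them gives `q = 0`; hence `s² = s`, and `s = 0` is excluded for
`c ≠ 0` because then `c₀² + c₁² + c₂² = s² - 2q = 0`. Substituting `s = 1`, `q = 0` gives
`t³ - t² - t/4 + 1/4 = (t - 1)(t - 1/2)(t + 1/2)`.
-/

open Polynomial Matrix

namespace CircleAlgebra

variable {K : Type*} [Field K]

def circleMul (x y : Fin 3 → K) : Fin 3 → K :=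
  ![x 0 * y 0 - (x 1 * y 2 + x 2 * y 1) / 2,
    x 1 * y 1 - (x 0 * y 2 + x 2 * y 0) / 2,
    x 2 * y 2 - (x 0 * y 1 + x 1 * y 0) / 2]

def mulMatrix (c : Fin 3 → K) : Matrix (Fin 3) (Fin 3) K :=
  !![c 0, -c 2 / 2, -c 1 / 2; -c 2 / 2, c 1, -c 0 / 2; -c 1 / 2, -c 0 / 2, c 2]

theorem mulMatrix_mulVec (c y : Fin 3 → K) : mulMatrix c *ᵥ y = circleMul c y := by
  ext i
  fin_cases i <;> simp [mulMatrix, circleMul, mulVec, dotProduct, Fin.sum_univ_three] <;> ring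

theorem charpoly_mulMatrix [CharZero K] {c : Fin 3 → K} {s q : K}
    (hs : c 0 + c 1 + c 2 = s) (hq : c 0 * c 1 + c 1 * c 2 + c 0 * c 2 = q) :
    (mulMatrix c).charpoly =
      X ^ 3 - C s * X ^ 2 + C (3 / 2 * q - s ^ 2 / 4) * X + C ((s ^ 3 - 3 * s * q) / 4) := by
  subst hs hq
  refine Polynomial.funext fun x => ?_
  simp [Matrix.charpoly, Matrix.det_fin_three, mulMatrix]
  ring

theorem sq_sub_mul_eq_of_circleMul_self [CharZero K] {c : Fin 3 → K} (h : circleMul c c = c) :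
    c 0 ^ 2 - c 1 * c 2 = c 0 ∧ c 1 ^ 2 - c 0 * c 2 = c 1 ∧ c 2 ^ 2 - c 0 * c 1 = c 2 := by
  have h₀ := congrFun h 0
  have h₁ := congrFun h 1
  have h₂ := congrFun h 2
  simp only [circleMul, Fin.isValue, cons_val] at h₀ h₁ h₂
  exact ⟨by linear_combination h₀, by linear_combination h₁, by linear_combination h₂⟩

theorem mul_add_mul_add_mul_eq_zero_of_circleMul_self [CharZero K] {c : Fin 3 → K}
    (h : circleMul c c = c) : c 0 * c 1 + c 1 * c 2 + c 0 * c 2 = 0 := by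
  obtain ⟨h₀, h₁, h₂⟩ := sq_sub_mul_eq_of_circleMul_self h
  linear_combination (-(c 1 + c 2) / 2) * h₀ - ((c 0 + c 2) / 2) * h₁ - ((c 0 + c 1) / 2) * h₂

theorem sum_eq_one_of_circleMul_self [LinearOrder K] [IsStrictOrderedRing K] {c : Fin 3 → K}
    (hc : c ≠ 0) (h : circleMul c c = c) : c 0 + c 1 + c 2 = 1 := by
  obtain ⟨h₀, h₁, h₂⟩ := sq_sub_mul_eq_of_circleMul_self h
  have hq := mul_add_mul_add_mul_eq_zero_of_circleMul_self h
  have hs : (c 0 + c 1 + c 2) * (c 0 + c 1 + c 2 - 1) = 0 := by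
    linear_combination h₀ + h₁ + h₂ + 3 * hq
  refine sub_eq_zero.1 <| (mul_eq_zero.1 hs).resolve_left fun hs₀ => hc ?_
  have hsq : c 0 ^ 2 + c 1 ^ 2 + c 2 ^ 2 = 0 := by
    linear_combination (c 0 + c 1 + c 2) * hs₀ - 2 * hq
  have hc₀ : c 0 = 0 := by nlinarith [sq_nonneg (c 0), sq_nonneg (c 1), sq_nonneg (c 2)]
  have hc₁ : c 1 = 0 := by nlinarith [sq_nonneg (c 0), sq_nonneg (c 1), sq_nonneg (c 2)]
  have hc₂ : c 2 = 0 := by nlinarith [sq_nonneg (c 0), sq_nonneg (c 1), sq_nonneg (c 2)]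
  ext i
  fin_cases i <;> assumption

end CircleAlgebra

open CircleAlgebra in
/-- Example 3.6: Peirce spectrum. For the commutative algebra on `ℝ³` with
multiplication `x∘y = (x₁y₁ - (x₂y₃ + x₃y₂)/2, x₂y₂ - (x₁y₃ + x₃y₁)/2,
x₃y₃ - (x₁y₂ + x₂y₁)/2)`, the characteristic polynomial of the multiplication
operator `L_c` of every nonzero idempotent `c` is `(t - 1)(t - 1/2)(t + 1/2)`;
so the Peirce spectrum of every nonzero idempotent is `{1, 1/2, -1/2}`. -/
theorem peirce_spectrum_of_circle_algebra
    (mul : (Fin 3 → ℝ) →ₗ[ℝ] (Fin 3 → ℝ) →ₗ[ℝ] (Fin 3 → ℝ))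
    (hmul : ∀ x y, mul x y =
      ![x 0 * y 0 - (x 1 * y 2 + x 2 * y 1) / 2,
        x 1 * y 1 - (x 0 * y 2 + x 2 * y 0) / 2,
        x 2 * y 2 - (x 0 * y 1 + x 1 * y 0) / 2]) :
    ∀ c : Fin 3 → ℝ, c ≠ 0 → mul c c = c →
      LinearMap.charpoly (mul c)
        = (X - 1) * (X - C (1 / 2 : ℝ)) * (X + C (1 / 2 : ℝ)) := by
  intro c hc hidem
  have hc_idem : circleMul c c = c := (hmul c c).symm.trans hidem
  have hL : mul c = (mulMatrix c).toLin' :=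
    LinearMap.ext fun y => by rw [toLin'_apply, mulMatrix_mulVec]; exact hmul c y
  rw [hL, charpoly_toLin',
    charpoly_mulMatrix (sum_eq_one_of_circleMul_self hc hc_idem)
      (mul_add_mul_add_mul_eq_zero_of_circleMul_self hc_idem)]
  refine Polynomial.funext fun x => ?_
  simp
  ring
end

section
/- Let A be the commutative algebra on ℝ³ with multiplication x∘y = (x_1y_1 − (x_2y_3 + x_3y_2)/2, x_2y_2 − (x_1y_3 + x_3y_1)/2, x_3y_3 − (x_1y_2 + x_2y_1)/2). Then an element x ∈ ℝ³ satisfies x∘x = 0 if and only if x_1 = x_2 = x_3; that is, the set of 2-nilpotents of A is the line ℝ·(1,1,1). -/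
/-! The three coordinates of `x ∘ x` are `a² - bc`, `b² - ca`, `c² - ab` for `x = (a, b, c)`, and
twice their sum is `(a - b)² + (b - c)² + (c - a)²`. So `x ∘ x = 0` forces this sum of squares to
vanish, i.e. `a = b = c`. -/

theorem eq_and_eq_of_sq_sub_add_sq_sub_add_sq_sub_eq_zero {R : Type*} [Ring R] [LinearOrder R]
    [IsStrictOrderedRing R] {a b c : R}
    (h : (a - b) ^ 2 + (b - c) ^ 2 + (c - a) ^ 2 = 0) : a = b ∧ b = c := by
  obtain ⟨hab_bc, hca⟩ :=
    (add_eq_zero_iff_of_nonneg (by positivity) (sq_nonneg (c - a))).mp h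
  obtain ⟨hab, hbc⟩ :=
    (add_eq_zero_iff_of_nonneg (sq_nonneg (a - b)) (sq_nonneg (b - c))).mp hab_bc
  exact ⟨sub_eq_zero.mp (pow_eq_zero_iff two_ne_zero |>.mp hab),
    sub_eq_zero.mp (pow_eq_zero_iff two_ne_zero |>.mp hbc)⟩

theorem mul_self_sub_cross_terms_eq_zero_iff {K : Type*} [Field K] [LinearOrder K]
    [IsStrictOrderedRing K] (a b c : K) :
    (a * a - (b * c + c * b) / 2 = 0 ∧ b * b - (a * c + c * a) / 2 = 0 ∧
      c * c - (a * b + b * a) / 2 = 0) ↔ a = b ∧ b = c := by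
  constructor
  · rintro ⟨ha, hb, hc⟩
    exact eq_and_eq_of_sq_sub_add_sq_sub_add_sq_sub_eq_zero
      (by linear_combination 2 * (ha + hb + hc))
  · rintro ⟨rfl, rfl⟩
    refine ⟨?_, ?_, ?_⟩ <;> ring

/-- Example 3.6: 2-nilpotents. For the commutative algebra on `ℝ³` with
multiplication `x∘y = (x₁y₁ - (x₂y₃ + x₃y₂)/2, x₂y₂ - (x₁y₃ + x₃y₁)/2,
x₃y₃ - (x₁y₂ + x₂y₁)/2)`, an element `x` satisfies `x∘x = 0` iff
`x₁ = x₂ = x₃`: the 2-nilpotents form the line `ℝ·(1,1,1)`. -/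
theorem nilpotents_of_circle_algebra
    (mul : (Fin 3 → ℝ) → (Fin 3 → ℝ) → (Fin 3 → ℝ))
    (hmul : ∀ x y, mul x y =
      ![x 0 * y 0 - (x 1 * y 2 + x 2 * y 1) / 2,
        x 1 * y 1 - (x 0 * y 2 + x 2 * y 0) / 2,
        x 2 * y 2 - (x 0 * y 1 + x 1 * y 0) / 2]) :
    ∀ x : Fin 3 → ℝ, (mul x x = 0 ↔ x 0 = x 1 ∧ x 1 = x 2) := by
  intro x
  rw [hmul, ← mul_self_sub_cross_terms_eq_zero_iff]
  simp only [Matrix.cons_eq_zero_iff, Matrix.zero_empty, and_true]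
end
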